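/- Suppose m ≥ 2 and D ∈ Λ_m satisfies ⟨D, v⟩ ≥ 0 for each of the vectors e_1, …, e_m, s, f, f+s−e_1−e_2, f+s−e_1, f+s−e_2, and −K. Write D (uniquely) as D = a(s−f) + b(f−e_1−e_2) + Σ_{1 ≤ i < m} c_i(e_i−e_{i+1}) + c_m·e_m. Then the coefficients satisfy c_2 ≥ c_3 ≥ ⋯ ≥ c_m ≥ 0, c_2 ≥ b ≥ a ≥ 0, and c_2 ≥ c_1 ≥ 0. (In particular any nef divisor class D with D·K ≤ 0 on a rational surface with blowdown structure is a nonnegative ℤ-linear combination of the simple roots and e_m, with convexity constraints on the coefficients.) -/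

import Mathlib

/-- The basis vector `s` of the lattice `Λ_m = ℤ^{m+2}` (coordinate 0). -/
def sV (m : ℕ) : Fin (m + 2) → ℤ := fun i => if (i : ℕ) = 0 then 1 else 0

/-- The basis vector `f` of the lattice `Λ_m = ℤ^{m+2}` (coordinate 1). -/
def fV (m : ℕ) : Fin (m + 2) → ℤ := fun i => if (i : ℕ) = 1 then 1 else 0

/-- The basis vector `e_j` (for `1 ≤ j ≤ m`) of the lattice `Λ_m = ℤ^{m+2}`
(coordinate `j+1`). -/
def eV (m j : ℕ) : Fin (m + 2) → ℤ := fun i => if (i : ℕ) = j + 1 then 1 else 0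

/-- The even intersection form on `Λ_m`: `⟨s,s⟩ = 0`, `⟨s,f⟩ = 1`, `⟨f,f⟩ = 0`,
`⟨s,e_i⟩ = ⟨f,e_i⟩ = 0`, `⟨e_i,e_j⟩ = −δ_{ij}`. -/
def evenForm (m : ℕ) (u v : Fin (m + 2) → ℤ) : ℤ :=
  u 0 * v 1 + u 1 * v 0 - ∑ i : Fin (m + 2), if 2 ≤ (i : ℕ) then u i * v i else 0

/-- The canonical class `K = −2s − 2f + Σ_{i=1}^m e_i` (even case). -/
def evenK (m : ℕ) : Fin (m + 2) → ℤ :=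
  (-2 : ℤ) • sV m + (-2 : ℤ) • fV m + ∑ j ∈ Finset.Icc 1 m, eV m j

/-- The even simple roots: `σ_0 = s − f`, `σ_1 = f − e_1 − e_2`,
`σ_k = e_{k−1} − e_k` for `2 ≤ k ≤ m`. -/
def evenRoot (m k : ℕ) : Fin (m + 2) → ℤ :=
  if k = 0 then sV m - fV m
  else if k = 1 then fV m - eV m 1 - eV m 2
  else eV m (k - 1) - eV m k

/-!
Write `D` in simple-root coordinates and pair it with each test class. As `⟨s, f⟩ = 1` and
`⟨e_i, e_j⟩ = -δ_ij`, the pairings with `f`, `s`, `f + s - e_1`, `f + s - e_2`,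
`f + s - e_1 - e_2` and `e_{i+1}` (`i ≥ 2`) are `a`, `b - a`, `c_1`, `c_2 - c_1`, `c_2 - b` and
`c_i - c_{i+1}`; as every simple root is orthogonal to `K` while `⟨e_m, -K⟩ = 1`, the pairing
with `-K` is `c_m`.
-/

open Finset

section

variable {m : ℕ}

def evenFormₗ (m : ℕ) : (Fin (m + 2) → ℤ) →ₗ[ℤ] (Fin (m + 2) → ℤ) →ₗ[ℤ] ℤ :=
  LinearMap.mk₂ ℤ (evenForm m)
    (fun u u' v => by
      simp only [evenForm, ← sum_filter, Pi.add_apply, add_mul, sum_add_distrib]; ring)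
    (fun r u v => by
      simp only [evenForm, ← sum_filter, Pi.smul_apply, smul_eq_mul, mul_assoc, ← mul_sum]; ring)
    (fun u v v' => by
      simp only [evenForm, ← sum_filter, Pi.add_apply, mul_add, sum_add_distrib]; ring)
    (fun r u v => by
      simp only [evenForm, ← sum_filter, Pi.smul_apply, smul_eq_mul, mul_left_comm _ r,
        ← mul_sum]
      ring)

theorem evenFormₗ_apply (u v : Fin (m + 2) → ℤ) : evenFormₗ m u v = evenForm m u v := rfl

theorem evenForm_add_right (u v w : Fin (m + 2) → ℤ) :
    evenForm m u (v + w) = evenForm m u v + evenForm m u w :=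
  map_add (evenFormₗ m u) v w

theorem evenForm_sub_right (u v w : Fin (m + 2) → ℤ) :
    evenForm m u (v - w) = evenForm m u v - evenForm m u w :=
  map_sub (evenFormₗ m u) v w

theorem evenForm_sub_left (u v w : Fin (m + 2) → ℤ) :
    evenForm m (u - v) w = evenForm m u w - evenForm m v w :=
  LinearMap.map_sub₂ (evenFormₗ m) u v w

theorem evenForm_sV (u : Fin (m + 2) → ℤ) : evenForm m u (sV m) = u 1 := by
  rw [evenForm, sum_eq_zero fun i _ => by simp only [sV]; split_ifs <;> simp_all]
  simp [sV]

theorem evenForm_fV (u : Fin (m + 2) → ℤ) : evenForm m u (fV m) = u 0 := by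
  rw [evenForm, sum_eq_zero fun i _ => by simp only [fV]; split_ifs <;> omega]
  simp [fV]

theorem evenForm_eV {j : ℕ} (hj : 1 ≤ j) (hjm : j ≤ m) (u : Fin (m + 2) → ℤ) :
    evenForm m u (eV m j) = -u ⟨j + 1, by omega⟩ := by
  have : ∀ i : Fin (m + 2), (2 ≤ (i : ℕ) ∧ (i : ℕ) = j + 1) ↔ i = ⟨j + 1, by omega⟩ := by
    intro i; simp only [Fin.ext_iff]; omega
  simp [evenForm, eV, ← ite_and, this, show j ≠ 0 by omega]

theorem evenForm_eV_eV {i j : ℕ} (hj : 1 ≤ j) (hjm : j ≤ m) :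
    evenForm m (eV m i) (eV m j) = if i = j then -1 else 0 := by
  rw [evenForm_eV hj hjm]
  simp only [eV]
  split_ifs <;> subst_vars <;> omega

theorem evenForm_evenK (u : Fin (m + 2) → ℤ) :
    evenForm m u (evenK m) = -2 * u 1 - 2 * u 0 + ∑ j ∈ Icc 1 m, evenForm m u (eV m j) := by
  simp only [← evenFormₗ_apply, evenK, map_add, map_smul, map_sum, smul_eq_mul]
  simp only [evenFormₗ_apply, evenForm_sV, evenForm_fV]
  ring

theorem evenForm_eV_evenK {i : ℕ} (hi : 1 ≤ i) (him : i ≤ m) :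
    evenForm m (eV m i) (evenK m) = -1 := by
  rw [evenForm_evenK,
    sum_congr rfl fun j hj => evenForm_eV_eV (i := i) (mem_Icc.1 hj).1 (mem_Icc.1 hj).2]
  simp [eV, sum_ite_eq, hi, him, show i ≠ 0 by omega]

theorem evenForm_sV_evenK : evenForm m (sV m) (evenK m) = -2 := by
  rw [evenForm_evenK, sum_eq_zero fun j hj => ?_]
  · simp [sV]
  · rw [evenForm_eV (mem_Icc.1 hj).1 (mem_Icc.1 hj).2]; simp [sV]

theorem evenForm_fV_evenK : evenForm m (fV m) (evenK m) = -2 := by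
  rw [evenForm_evenK, sum_eq_zero fun j hj => ?_]
  · simp [fV]
  · rw [evenForm_eV (mem_Icc.1 hj).1 (mem_Icc.1 hj).2]
    simp [fV, Nat.one_le_iff_ne_zero.1 (mem_Icc.1 hj).1]

theorem evenForm_evenRoot_evenK (hm : 2 ≤ m) {k : ℕ} (hk : k ≤ m) :
    evenForm m (evenRoot m k) (evenK m) = 0 := by
  unfold evenRoot
  split_ifs with h0 h1
  · rw [evenForm_sub_left, evenForm_sV_evenK, evenForm_fV_evenK, sub_self]
  · rw [evenForm_sub_left, evenForm_sub_left, evenForm_fV_evenK,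
      evenForm_eV_evenK le_rfl (by omega), evenForm_eV_evenK (by omega) hm]
    norm_num
  · rw [evenForm_sub_left, evenForm_eV_evenK (by omega) (by omega),
      evenForm_eV_evenK (by omega) hk, sub_self]

theorem evenRoot_succ {i : ℕ} (hi : 1 ≤ i) : evenRoot m (i + 1) = eV m i - eV m (i + 1) := by
  simp [evenRoot, show i ≠ 0 by omega]

def rootExpansion (m : ℕ) (a b : ℤ) (c : ℕ → ℤ) : Fin (m + 2) → ℤ :=
  a • evenRoot m 0 + b • evenRoot m 1 + ∑ i ∈ Ico 1 m, c i • evenRoot m (i + 1) + c m • eV m m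

theorem rootExpansion_eq (a b : ℤ) (c : ℕ → ℤ) : rootExpansion m a b c =
    a • (sV m - fV m) + b • (fV m - eV m 1 - eV m 2) +
      (∑ i ∈ Ico 1 m, c i • (eV m i - eV m (i + 1))) + c m • eV m m := by
  rw [rootExpansion, sum_congr rfl fun i hi => by rw [evenRoot_succ (mem_Ico.1 hi).1]]
  simp [evenRoot]

theorem evenForm_rootExpansion_sV (hm : 1 ≤ m) (a b : ℤ) (c : ℕ → ℤ) :
    evenForm m (rootExpansion m a b c) (sV m) = b - a := by
  rw [evenForm_sV, rootExpansion_eq]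
  simp [sV, fV, eV, Finset.sum_apply, show m ≠ 0 by omega, neg_add_eq_sub]

theorem evenForm_rootExpansion_fV (a b : ℤ) (c : ℕ → ℤ) :
    evenForm m (rootExpansion m a b c) (fV m) = a := by
  rw [evenForm_fV, rootExpansion_eq]
  simp [sV, fV, eV, Finset.sum_apply]

theorem evenForm_rootExpansion_eV (a b : ℤ) (c : ℕ → ℤ) {j : ℕ} (hj : 1 ≤ j) (hjm : j ≤ m) :
    evenForm m (rootExpansion m a b c) (eV m j) =
      (if j ≤ 2 then b else 0) + (if 2 ≤ j then c (j - 1) else 0) - c j := by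
  have hpred : ∀ x, j = x + 1 ↔ x = j - 1 := fun x => by omega
  rw [evenForm_eV hj hjm, rootExpansion_eq]
  simp only [zsmul_eq_mul, mul_sub, sum_sub_distrib, Pi.add_apply, Pi.sub_apply, Pi.mul_apply,
    Pi.intCast_apply, Int.cast_eq, sV, Nat.add_eq_zero_iff, show j ≠ 0 by omega, one_ne_zero,
    and_self, ↓reduceIte, mul_zero, fV, Nat.add_eq_right, sub_self, eV, Nat.reduceAdd,
    Nat.reduceEqDiff, hpred, mul_ite, mul_one, zero_sub, zero_add, Finset.sum_apply,
    Nat.add_right_cancel_iff, sum_ite_eq, mem_Ico, sum_ite_eq', neg_add_rev, neg_sub,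
    sub_neg_eq_add]
  split_ifs <;> subst_vars <;> omega

theorem evenForm_rootExpansion_neg_evenK (hm : 2 ≤ m) (a b : ℤ) (c : ℕ → ℤ) :
    evenForm m (rootExpansion m a b c) (-evenK m) = c m := by
  have hroot : ∀ k ≤ m, evenForm m (evenRoot m k) (evenK m) = 0 := fun k hk =>
    evenForm_evenRoot_evenK hm hk
  rw [← evenFormₗ_apply, map_neg, ← LinearMap.flip_apply, rootExpansion]
  simp only [map_add, map_smul, map_sum, LinearMap.flip_apply, evenFormₗ_apply, smul_eq_mul,
    hroot 0 (by omega), hroot 1 (by omega), evenForm_eV_evenK (by omega : 1 ≤ m) le_rfl]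
  rw [sum_eq_zero fun i hi => by rw [hroot (i + 1) (mem_Ico.1 hi).2, mul_zero]]
  ring

end

/-- For `m ≥ 2`, suppose `D ∈ Λ_m` pairs nonnegatively with each of the vectors
`e_1, …, e_m`, `s`, `f`, `f+s−e_1−e_2`, `f+s−e_1`, `f+s−e_2`, and `−K`.  Write `D`
(uniquely) as `D = a(s−f) + b(f−e_1−e_2) + Σ_{1 ≤ i < m} c_i(e_i−e_{i+1}) + c_m·e_m`.
Then `c_2 ≥ c_3 ≥ ⋯ ≥ c_m ≥ 0`, `c_2 ≥ b ≥ a ≥ 0`, and `c_2 ≥ c_1 ≥ 0`. -/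
theorem nef_class_nonneg_root_coefficients (m : ℕ) (hm : 2 ≤ m)
    (D : Fin (m + 2) → ℤ)
    (he : ∀ i, 1 ≤ i → i ≤ m → 0 ≤ evenForm m D (eV m i))
    (hs : 0 ≤ evenForm m D (sV m))
    (hf : 0 ≤ evenForm m D (fV m))
    (hfs12 : 0 ≤ evenForm m D (fV m + sV m - eV m 1 - eV m 2))
    (hfs1 : 0 ≤ evenForm m D (fV m + sV m - eV m 1))
    (hfs2 : 0 ≤ evenForm m D (fV m + sV m - eV m 2))
    (hK : 0 ≤ evenForm m D (-evenK m))
    (a b : ℤ) (c : ℕ → ℤ)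
    (hD : D = a • (sV m - fV m) + b • (fV m - eV m 1 - eV m 2) +
        (∑ i ∈ Finset.Ico 1 m, c i • (eV m i - eV m (i + 1))) + c m • eV m m) :
    (∀ i, 2 ≤ i → i < m → c (i + 1) ≤ c i) ∧ 0 ≤ c m ∧
      b ≤ c 2 ∧ a ≤ b ∧ 0 ≤ a ∧ c 1 ≤ c 2 ∧ 0 ≤ c 1 := by
  rw [← rootExpansion_eq] at hD
  subst hD
  have hDe1 := evenForm_rootExpansion_eV a b c le_rfl (by omega : 1 ≤ m)
  have hDe2 := evenForm_rootExpansion_eV a b c (by omega : 1 ≤ 2) hm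
  norm_num at hDe1 hDe2
  simp only [evenForm_add_right, evenForm_sub_right, evenForm_rootExpansion_sV (by omega : 1 ≤ m),
    evenForm_rootExpansion_fV, evenForm_rootExpansion_neg_evenK hm, hDe1, hDe2]
    at hs hf hfs12 hfs1 hfs2 hK
  refine ⟨fun i hi him => ?_, by linarith, by linarith, by linarith, by linarith, by linarith,
    by linarith⟩
  have hDei := he (i + 1) (by omega) (by omega)
  rw [evenForm_rootExpansion_eV a b c (by omega) (by omega), if_neg (by omega), if_pos (by omega),
    Nat.add_sub_cancel] at hDei
  linarith
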